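/- If M and N are small fb-tableaux of size n, then their meet and join in the lattice esTam_n are small; if M and N are binary fb-tableaux of size n, then their meet and join in esTam_n are binary. Consequently, the small fb-tableaux form a sublattice sTam_n of esTam_n (the slow Tamari lattice), and the binary fb-tableaux form a sublattice Tam_n of sTam_n. -/

import Mathlib

open scoped Classical

namespace EsTam

/-- A cell `(i, j)`: `i` is the row index, `j` the column index. -/
abbrev Cell := ℕ × ℕ

/-- Membership in the staircase shape of size `n`: rows `1` and `2` consist of the
cells `(i, j)` with `1 ≤ j ≤ n`, and row `i` for `3 ≤ i ≤ n` consists of the cells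
`(i, j)` with `i - 1 ≤ j ≤ n`. -/
def IsCell (n : ℕ) (c : Cell) : Prop :=
  1 ≤ c.1 ∧ c.1 ≤ n ∧ 1 ≤ c.2 ∧ c.2 ≤ n ∧ (c.1 ≤ 2 ∨ c.1 - 1 ≤ c.2)

/-- The root cell `(1, n)`. -/
def root (n : ℕ) : Cell := (1, n)

/-- The border cells `(i, i - 1)` for `2 ≤ i ≤ n`. -/
def IsBorder (n : ℕ) (c : Cell) : Prop :=
  2 ≤ c.1 ∧ c.1 ≤ n ∧ c.2 = c.1 - 1

/-- An fb-tableau of size `n`: a set of cells of the staircase shape containing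
the root and all border cells, and such that every cell other than the root has a
cell of the tableau strictly to its left in its row (same `i`, larger `j`) or
strictly above it in its column (same `j`, smaller `i`). -/
structure FB (n : ℕ) where
  cells : Set Cell
  isCell_of_mem : ∀ c ∈ cells, IsCell n c
  root_mem : root n ∈ cells
  border_mem : ∀ c : Cell, IsBorder n c → c ∈ cells
  supported : ∀ c ∈ cells, c ≠ root n →
    (∃ j', c.2 < j' ∧ ((c.1, j') : Cell) ∈ cells) ∨
    (∃ i', i' < c.1 ∧ ((i', c.2) : Cell) ∈ cells)

variable {n : ℕ}

/-- `c` is a left-arrow of `T`: a cell of `T`, other than the root, with no cell of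
`T` strictly to its left in its row. -/
def IsLeftArrow (T : FB n) (c : Cell) : Prop :=
  c ∈ T.cells ∧ c ≠ root n ∧ ∀ j', c.2 < j' → ((c.1, j') : Cell) ∉ T.cells

/-- `c` is an up-arrow of `T`: a cell of `T`, other than the root, with no cell of
`T` strictly above it in its column. -/
def IsUpArrow (T : FB n) (c : Cell) : Prop :=
  c ∈ T.cells ∧ c ≠ root n ∧ ∀ i', i' < c.1 → ((i', c.2) : Cell) ∉ T.cells

/-- The row space of `T`: cells lying, in their row, weakly to the right of the
root or of a left-arrow of `T`. -/
def RowSp (T : FB n) : Set Cell :=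
  {c | IsCell n c ∧ ∃ j', c.2 ≤ j' ∧
    (((c.1, j') : Cell) = root n ∨ IsLeftArrow T (c.1, j'))}

/-- The column space of `T`: cells lying, in their column, weakly below the root or
an up-arrow of `T`. -/
def ColSp (T : FB n) : Set Cell :=
  {c | IsCell n c ∧ ∃ i', i' ≤ c.1 ∧
    (((i', c.2) : Cell) = root n ∨ IsUpArrow T (i', c.2))}

/-- `c` is a free cell of `T`: it lies strictly below the up-arrow of `T` in its
column and strictly to the right of the left-arrow of `T` in its row. -/
def IsFree (T : FB n) (c : Cell) : Prop :=
  IsCell n c ∧ (∃ i', i' < c.1 ∧ IsUpArrow T (i', c.2)) ∧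
    (∃ j', c.2 < j' ∧ IsLeftArrow T (c.1, j'))

/-- The relation `S ⊲ T` on fb-tableaux of size `n`. -/
def Lhd (S T : FB n) : Prop :=
  ColSp S ⊆ ColSp T ∧ RowSp T ⊆ RowSp S ∧
    ∀ c : Cell, IsFree S c → IsFree T c → c ∈ S.cells → c ∈ T.cells

/-- `T` covers `S` in `esTam n`. -/
def CovRel (S T : FB n) : Prop :=
  Lhd S T ∧ S ≠ T ∧ ∀ U : FB n, Lhd S U → Lhd U T → U = S ∨ U = T

/-- `m` is the greatest lower bound of `x` and `y` in `esTam n`. -/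
def IsMeet (x y m : FB n) : Prop :=
  Lhd m x ∧ Lhd m y ∧ ∀ t : FB n, Lhd t x → Lhd t y → Lhd t m

/-- `j` is the least upper bound of `x` and `y` in `esTam n`. -/
def IsJoin (x y j : FB n) : Prop :=
  Lhd x j ∧ Lhd y j ∧ ∀ t : FB n, Lhd x t → Lhd y t → Lhd j t

/-- `T` is join-irreducible: it covers exactly one element. -/
def JoinIrr (T : FB n) : Prop := ∃! S : FB n, CovRel S T

/-- `T` is meet-irreducible: it is covered by exactly one element. -/
def MeetIrr (T : FB n) : Prop := ∃! S : FB n, CovRel T S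

/-- A strict chain `f 0 ⊲ f 1 ⊲ ⋯ ⊲ f m` of length `m`. -/
def IsStrictChain {m : ℕ} (f : Fin (m + 1) → FB n) : Prop :=
  ∀ i j : Fin (m + 1), i < j → Lhd (f i) (f j) ∧ f i ≠ f j

/-- `T` is small: every cell of `T` other than the root is an arrow. -/
def IsSmall (T : FB n) : Prop :=
  ∀ c ∈ T.cells, c ≠ root n → IsLeftArrow T c ∨ IsUpArrow T c

/-- `T` is binary: `T` has no free cells. -/
def IsBinary (T : FB n) : Prop := ∀ c : Cell, ¬ IsFree T c

/-- `c` lies strictly above the up-arrow of `T` in its column. -/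
def PointedUp (T : FB n) (c : Cell) : Prop :=
  ∃ i', c.1 < i' ∧ IsUpArrow T (i', c.2)

/-- `c` is pointed by a left-arrow of `T`: it lies strictly to the left of the
left-arrow of `T` in its row. -/
def PointedLeft (T : FB n) (c : Cell) : Prop :=
  ∃ j', j' < c.2 ∧ IsLeftArrow T (c.1, j')

end EsTam

/-!
A small fb-tableau is determined by the positions of its arrows, and between small tableaux
`S ⊲ T` only says that each up-arrow of `T` lies weakly above that of `S` and each left-arrow of
`T` weakly to the right of that of `S`. So the meet of small `M` and `N` takes in each column the
lower of their up-arrows and in each row the more leftward of their left-arrows, pushed further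
left until the up-arrow of its column lies above it, which makes it supported; the join is dual.
A dot that is free in a common lower bound `t` lies weakly left of the left-arrows of `M` and
`N`, since otherwise `t ⊲ M` would force a free dot into `M`; hence it is not free in the meet.
A free cell of the meet or join of binary tableaux would already be free in `M` or `N`.
Finally `⊲` is antisymmetric, so every meet or join is the one constructed.
-/

namespace EsTam

variable {n : ℕ}

lemma FB.one_le (T : FB n) : 1 ≤ n := (T.isCell_of_mem _ T.root_mem).2.1

lemma FB.ext {S T : FB n} (h : S.cells = T.cells) : S = T := by
  cases S; cases T; cases h; rfl

lemma FB.mk_sub_one_mem (T : FB n) {i : ℕ} (h2 : 2 ≤ i) (h3 : i ≤ n) :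
    ((i, i - 1) : Cell) ∈ T.cells :=
  T.border_mem _ ⟨h2, h3, rfl⟩

lemma FB.mk_succ_mem (T : FB n) {j : ℕ} (h1 : 1 ≤ j) (h2 : j < n) :
    ((j + 1, j) : Cell) ∈ T.cells := by
  simpa using T.mk_sub_one_mem (i := j + 1) (by omega) (by omega)

section ArrowPositions

noncomputable def upRow (T : FB n) (j : ℕ) : ℕ := sInf {i | ((i, j) : Cell) ∈ T.cells}

noncomputable def leftCol (T : FB n) (i : ℕ) : ℕ := sSup {j | ((i, j) : Cell) ∈ T.cells}

variable (T : FB n) {i j : ℕ}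

lemma bddAbove_row (i : ℕ) : BddAbove {j | ((i, j) : Cell) ∈ T.cells} :=
  ⟨n, fun _ hj => (T.isCell_of_mem _ hj).2.2.2.1⟩

lemma leftCol_le_n (i : ℕ) : leftCol T i ≤ n :=
  csSup_le' fun _ hj => (T.isCell_of_mem _ hj).2.2.2.1

variable {T}

lemma le_leftCol (h : ((i, j) : Cell) ∈ T.cells) : j ≤ leftCol T i :=
  le_csSup (bddAbove_row T i) h

lemma upRow_le (h : ((i, j) : Cell) ∈ T.cells) : upRow T j ≤ i :=
  Nat.sInf_le h

variable (T)

lemma mk_leftCol_mem (h2 : 2 ≤ i) (h3 : i ≤ n) : ((i, leftCol T i) : Cell) ∈ T.cells :=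
  Nat.sSup_mem ⟨_, T.mk_sub_one_mem h2 h3⟩ (bddAbove_row T i)

lemma mk_upRow_mem (h1 : 1 ≤ j) (h2 : j < n) : ((upRow T j, j) : Cell) ∈ T.cells :=
  Nat.sInf_mem (s := {i | ((i, j) : Cell) ∈ T.cells}) ⟨_, T.mk_succ_mem h1 h2⟩

lemma sub_one_le_leftCol (h2 : 2 ≤ i) (h3 : i ≤ n) : i - 1 ≤ leftCol T i :=
  le_leftCol (T.mk_sub_one_mem h2 h3)

lemma upRow_le_succ (h1 : 1 ≤ j) (h2 : j < n) : upRow T j ≤ j + 1 :=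
  upRow_le (T.mk_succ_mem h1 h2)

lemma one_le_upRow (h1 : 1 ≤ j) (h2 : j < n) : 1 ≤ upRow T j :=
  (T.isCell_of_mem _ (mk_upRow_mem T h1 h2)).1

lemma isLeftArrow_iff : IsLeftArrow T (i, j) ↔ 2 ≤ i ∧ i ≤ n ∧ j = leftCol T i := by
  constructor
  · rintro ⟨hmem, hroot, hleft⟩
    obtain ⟨hi1, hin, -, hjn, -⟩ := T.isCell_of_mem _ hmem
    have hi2 : 2 ≤ i := by
      by_contra! hi
      obtain rfl : i = 1 := by omega
      exact hleft n (by simp_all [root]; omega) T.root_mem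
    refine ⟨hi2, hin, (le_leftCol hmem).antisymm ?_⟩
    by_contra! hlt
    exact hleft _ hlt (mk_leftCol_mem T hi2 hin)
  · rintro ⟨hi2, hin, rfl⟩
    refine ⟨mk_leftCol_mem T hi2 hin, by simp [root]; omega, fun j' hj' hmem => ?_⟩
    exact absurd (le_leftCol hmem) (by simpa using hj')

lemma isUpArrow_iff : IsUpArrow T (i, j) ↔ 1 ≤ j ∧ j < n ∧ i = upRow T j := by
  constructor
  · rintro ⟨hmem, hroot, habove⟩
    obtain ⟨hi1, -, hj1, hjn, -⟩ := T.isCell_of_mem _ hmem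
    have hj : j < n := by
      by_contra! hj
      obtain rfl : j = n := by omega
      exact habove 1 (by simp_all [root]; omega) T.root_mem
    refine ⟨hj1, hj, (upRow_le hmem).antisymm' ?_⟩
    by_contra! hlt
    exact habove _ hlt (mk_upRow_mem T hj1 hj)
  · rintro ⟨hj1, hjn, rfl⟩
    refine ⟨mk_upRow_mem T hj1 hjn, by simp [root]; omega, fun i' hi' hmem => ?_⟩
    exact absurd (upRow_le hmem) (by simpa using hi')

lemma isFree_iff :
    IsFree T (i, j) ↔ IsCell n (i, j) ∧ upRow T j < i ∧ j < leftCol T i := by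
  constructor
  · rintro ⟨hc, ⟨i', hi', hu⟩, ⟨j', hj', hl⟩⟩
    rw [isUpArrow_iff] at hu
    rw [isLeftArrow_iff] at hl
    exact ⟨hc, hu.2.2 ▸ hi', hl.2.2 ▸ hj'⟩
  · rintro ⟨hc, hup, hleft⟩
    have hjn : j < n := hleft.trans_le (leftCol_le_n T i)
    have hi2 : 2 ≤ i := (one_le_upRow T hc.2.2.1 hjn).trans_lt hup
    exact ⟨hc, ⟨_, hup, (isUpArrow_iff T).2 ⟨hc.2.2.1, hjn, rfl⟩⟩,
      ⟨_, hleft, (isLeftArrow_iff T).2 ⟨hi2, hc.2.1, rfl⟩⟩⟩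

lemma IsFree.two_le_and_lt {T : FB n} (h : IsFree T (i, j)) : 2 ≤ i ∧ j < n := by
  obtain ⟨-, ⟨_, -, hu⟩, ⟨_, -, hl⟩⟩ := h
  exact ⟨((isLeftArrow_iff T).1 hl).1, ((isUpArrow_iff T).1 hu).2.1⟩

/-- The `supported` axiom at an up-arrow below the first row. -/
lemma lt_leftCol_upRow (h1 : 1 ≤ j) (h2 : j < n) (h : 2 ≤ upRow T j) :
    j < leftCol T (upRow T j) := by
  rcases T.supported _ (mk_upRow_mem T h1 h2) (by simp [root]; omega) with
    ⟨j', hj', hmem⟩ | ⟨i', hi', hmem⟩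
  · exact hj'.trans_le (le_leftCol hmem)
  · exact absurd (upRow_le hmem) (by simpa using hi')

/-- The `supported` axiom at a left-arrow. -/
lemma upRow_leftCol_lt (h2 : 2 ≤ i) (h3 : i ≤ n) : upRow T (leftCol T i) < i := by
  rcases T.supported _ (mk_leftCol_mem T h2 h3) (by simp [root]; omega) with
    ⟨j', hj', hmem⟩ | ⟨i', hi', hmem⟩
  · exact absurd (le_leftCol hmem) (by simpa using hj')
  · exact (upRow_le hmem).trans_lt hi'

lemma eq_root_or_isLeftArrow_or_isUpArrow_or_isFree {c : Cell} (hc : c ∈ T.cells) :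
    c = root n ∨ IsLeftArrow T c ∨ IsUpArrow T c ∨ IsFree T c := by
  obtain ⟨i, j⟩ := c
  by_cases hroot : ((i, j) : Cell) = root n
  · exact Or.inl hroot
  by_cases hl : IsLeftArrow T (i, j)
  · exact Or.inr (Or.inl hl)
  by_cases hu : IsUpArrow T (i, j)
  · exact Or.inr (Or.inr (Or.inl hu))
  obtain ⟨j', hj', hleft⟩ : ∃ j', j < j' ∧ ((i, j') : Cell) ∈ T.cells := by
    by_contra! h
    exact hl ⟨hc, hroot, h⟩
  obtain ⟨i', hi', habove⟩ : ∃ i', i' < i ∧ ((i', j) : Cell) ∈ T.cells := by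
    by_contra! h
    exact hu ⟨hc, hroot, h⟩
  exact Or.inr (Or.inr (Or.inr ((isFree_iff T).2 ⟨T.isCell_of_mem _ hc,
    (upRow_le habove).trans_lt hi', hj'.trans_le (le_leftCol hleft)⟩)))

end ArrowPositions

section Order

variable {S T : FB n}

lemma mem_rowSp_iff {i j : ℕ} :
    ((i, j) : Cell) ∈ RowSp T ↔ IsCell n (i, j) ∧ (i = 1 ∨ j ≤ leftCol T i) := by
  constructor
  · rintro ⟨hc, j', hj', hroot | hl⟩
    · exact ⟨hc, Or.inl (congrArg Prod.fst hroot)⟩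
    · exact ⟨hc, Or.inr (((isLeftArrow_iff T).1 hl).2.2 ▸ hj')⟩
  · rintro ⟨hc, hj⟩
    by_cases hi : i = 1
    · subst hi
      exact ⟨hc, n, hc.2.2.2.1, Or.inl rfl⟩
    have hi2 : 2 ≤ i := by have := hc.1; omega
    exact ⟨hc, _, hj.resolve_left hi, Or.inr ((isLeftArrow_iff T).2 ⟨hi2, hc.2.1, rfl⟩)⟩

lemma mem_colSp_iff {i j : ℕ} :
    ((i, j) : Cell) ∈ ColSp T ↔ IsCell n (i, j) ∧ (j = n ∨ upRow T j ≤ i) := by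
  constructor
  · rintro ⟨hc, i', hi', hroot | hu⟩
    · exact ⟨hc, Or.inl (congrArg Prod.snd hroot)⟩
    · exact ⟨hc, Or.inr (((isUpArrow_iff T).1 hu).2.2 ▸ hi')⟩
  · rintro ⟨hc, hi⟩
    by_cases hj : j = n
    · subst hj
      exact ⟨hc, 1, hc.1, Or.inl rfl⟩
    have hjn : j < n := by have := hc.2.2.2.1; omega
    exact ⟨hc, _, hi.resolve_left hj, Or.inr ((isUpArrow_iff T).2 ⟨hc.2.2.1, hjn, rfl⟩)⟩

lemma rowSp_subset_rowSp_iff :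
    RowSp T ⊆ RowSp S ↔ ∀ i, 2 ≤ i → i ≤ n → leftCol T i ≤ leftCol S i := by
  constructor
  · intro h i h2 h3
    have hmem := h (mem_rowSp_iff.2 ⟨T.isCell_of_mem _ (mk_leftCol_mem T h2 h3), Or.inr le_rfl⟩)
    exact (mem_rowSp_iff.1 hmem).2.resolve_left (by omega)
  · rintro h ⟨i, j⟩ hc
    obtain ⟨hcell, rfl | hj⟩ := mem_rowSp_iff.1 hc
    · exact mem_rowSp_iff.2 ⟨hcell, Or.inl rfl⟩
    by_cases hi : i = 1
    · exact mem_rowSp_iff.2 ⟨hcell, Or.inl hi⟩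
    exact mem_rowSp_iff.2 ⟨hcell, Or.inr (hj.trans (h i (by have := hcell.1; omega) hcell.2.1))⟩

lemma colSp_subset_colSp_iff :
    ColSp S ⊆ ColSp T ↔ ∀ j, 1 ≤ j → j < n → upRow T j ≤ upRow S j := by
  constructor
  · intro h j h1 h2
    have hmem := h (mem_colSp_iff.2 ⟨S.isCell_of_mem _ (mk_upRow_mem S h1 h2), Or.inr le_rfl⟩)
    exact (mem_colSp_iff.1 hmem).2.resolve_left (by omega)
  · rintro h ⟨i, j⟩ hc
    obtain ⟨hcell, rfl | hi⟩ := mem_colSp_iff.1 hc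
    · exact mem_colSp_iff.2 ⟨hcell, Or.inl rfl⟩
    by_cases hj : j = n
    · exact mem_colSp_iff.2 ⟨hcell, Or.inl hj⟩
    exact mem_colSp_iff.2
      ⟨hcell, Or.inr ((h j hcell.2.2.1 (by have := hcell.2.2.2.1; omega)).trans hi)⟩

lemma lhd_iff : Lhd S T ↔ (∀ j, 1 ≤ j → j < n → upRow T j ≤ upRow S j) ∧
    (∀ i, 2 ≤ i → i ≤ n → leftCol T i ≤ leftCol S i) ∧
    ∀ c : Cell, IsFree S c → IsFree T c → c ∈ S.cells → c ∈ T.cells := by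
  rw [Lhd, colSp_subset_colSp_iff, rowSp_subset_rowSp_iff]

lemma Lhd.upRow_le (h : Lhd S T) {j : ℕ} (h1 : 1 ≤ j) (h2 : j < n) :
    upRow T j ≤ upRow S j :=
  (lhd_iff.1 h).1 j h1 h2

lemma Lhd.leftCol_le (h : Lhd S T) {i : ℕ} (h2 : 2 ≤ i) (h3 : i ≤ n) :
    leftCol T i ≤ leftCol S i :=
  (lhd_iff.1 h).2.1 i h2 h3

lemma cells_subset_of_lhd_of_arrows_eq (h : Lhd S T)
    (hu : ∀ j, 1 ≤ j → j < n → upRow S j = upRow T j)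
    (hl : ∀ i, 2 ≤ i → i ≤ n → leftCol S i = leftCol T i) : S.cells ⊆ T.cells := by
  rintro ⟨i, j⟩ hc
  rcases eq_root_or_isLeftArrow_or_isUpArrow_or_isFree S hc with hr | hleft | hup | hfree
  · exact hr ▸ T.root_mem
  · obtain ⟨h2, h3, rfl⟩ := (isLeftArrow_iff S).1 hleft
    exact hl i h2 h3 ▸ mk_leftCol_mem T h2 h3
  · obtain ⟨h1, h2, rfl⟩ := (isUpArrow_iff S).1 hup
    exact hu j h1 h2 ▸ mk_upRow_mem T h1 h2
  · refine h.2.2 _ hfree ?_ hc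
    obtain ⟨hcell, hup, hleft⟩ := (isFree_iff S).1 hfree
    obtain ⟨hi2, hjn⟩ := hfree.two_le_and_lt
    exact (isFree_iff T).2
      ⟨hcell, hu j hcell.2.2.1 hjn ▸ hup, hl i hi2 hcell.2.1 ▸ hleft⟩

lemma lhd_antisymm (h : Lhd S T) (h' : Lhd T S) : S = T := by
  have hu : ∀ j, 1 ≤ j → j < n → upRow S j = upRow T j := fun j h1 h2 =>
    (h'.upRow_le h1 h2).antisymm (h.upRow_le h1 h2)
  have hl : ∀ i, 2 ≤ i → i ≤ n → leftCol S i = leftCol T i := fun i h2 h3 =>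
    (h'.leftCol_le h2 h3).antisymm (h.leftCol_le h2 h3)
  exact FB.ext ((cells_subset_of_lhd_of_arrows_eq h hu hl).antisymm
    (cells_subset_of_lhd_of_arrows_eq h' (fun j h1 h2 => (hu j h1 h2).symm)
      fun i h2 h3 => (hl i h2 h3).symm))

lemma IsMeet.unique {M N L L' : FB n} (h : IsMeet M N L) (h' : IsMeet M N L') : L = L' :=
  lhd_antisymm (h'.2.2 L h.1 h.2.1) (h.2.2 L' h'.1 h'.2.1)

lemma IsJoin.unique {M N L L' : FB n} (h : IsJoin M N L) (h' : IsJoin M N L') : L = L' :=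
  lhd_antisymm (h.2.2 L' h'.1 h'.2.1) (h'.2.2 L h.1 h.2.1)

end Order

section Small

variable {S T : FB n}

lemma IsSmall.not_isFree (hT : IsSmall T) {c : Cell} (hc : c ∈ T.cells) : ¬ IsFree T c := by
  obtain ⟨i, j⟩ := c
  intro hfree
  obtain ⟨-, hup, hleft⟩ := (isFree_iff T).1 hfree
  by_cases hroot : ((i, j) : Cell) = root n
  · simp only [root, Prod.mk.injEq] at hroot
    exact absurd (hleft.trans_le (leftCol_le_n T i)) (by omega)
  rcases hT _ hc hroot with hl | hu
  · exact absurd ((isLeftArrow_iff T).1 hl).2.2 (by omega)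
  · exact absurd ((isUpArrow_iff T).1 hu).2.2 (by omega)

lemma IsBinary.isSmall (hT : IsBinary T) : IsSmall T := fun c hc hroot => by
  rcases eq_root_or_isLeftArrow_or_isUpArrow_or_isFree T hc with hr | hl | hu | hf
  exacts [absurd hr hroot, Or.inl hl, Or.inr hu, absurd hf (hT c)]

lemma IsSmall.border (hT : IsSmall T) {i : ℕ} (h2 : 2 ≤ i) (h3 : i ≤ n) :
    leftCol T i = i - 1 ∨ upRow T (i - 1) = i := by
  rcases hT _ (T.mk_sub_one_mem h2 h3) (by simp [root]; omega) with hl | hu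
  · exact Or.inl ((isLeftArrow_iff T).1 hl).2.2.symm
  · exact Or.inr ((isUpArrow_iff T).1 hu).2.2.symm

lemma lhd_of_isSmall (hS : IsSmall S) (hu : ∀ j, 1 ≤ j → j < n → upRow T j ≤ upRow S j)
    (hl : ∀ i, 2 ≤ i → i ≤ n → leftCol T i ≤ leftCol S i) : Lhd S T :=
  lhd_iff.2 ⟨hu, hl, fun _ hfree _ hc => absurd hfree (hS.not_isFree hc)⟩

/-- Otherwise `(i, j)` would be free in `M` as well, and `t ⊲ M` would put a free dot into
the small tableau `M`. -/
lemma leftCol_le_of_lhd_of_isFree {t M : FB n} (hM : IsSmall M) (h : Lhd t M) {i j : ℕ}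
    (hfree : IsFree t (i, j)) (hc : ((i, j) : Cell) ∈ t.cells) : leftCol M i ≤ j := by
  obtain ⟨hcell, hup, -⟩ := (isFree_iff t).1 hfree
  by_contra! hlt
  have hjn : j < n := hlt.trans_le (leftCol_le_n M i)
  have hfreeM : IsFree M (i, j) :=
    (isFree_iff M).2 ⟨hcell, (h.upRow_le hcell.2.2.1 hjn).trans_lt hup, hlt⟩
  exact hM.not_isFree (h.2.2 _ hfree hfreeM hc) hfreeM

end Small

/-- The arrow configuration of a small fb-tableau: `up j` is the row of the up-arrow of
column `j` and `left i` the column of the left-arrow of row `i`. -/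
structure Arrows (n : ℕ) where
  up : ℕ → ℕ
  left : ℕ → ℕ
  one_le_up : ∀ j, 1 ≤ j → j < n → 1 ≤ up j
  up_le_succ : ∀ j, 1 ≤ j → j < n → up j ≤ j + 1
  sub_one_le_left : ∀ i, 2 ≤ i → i ≤ n → i - 1 ≤ left i
  left_le : ∀ i, 2 ≤ i → i ≤ n → left i ≤ n
  border : ∀ i, 2 ≤ i → i ≤ n → left i = i - 1 ∨ up (i - 1) = i
  up_supported : ∀ j, 1 ≤ j → j < n → up j = 1 ∨ j < left (up j)
  left_supported : ∀ i, 2 ≤ i → i ≤ n → left i = n ∨ up (left i) < i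

namespace Arrows

variable (A : Arrows n)

def cells : Set Cell :=
  {c | c = root n ∨ (∃ j, 1 ≤ j ∧ j < n ∧ c = (A.up j, j)) ∨
    ∃ i, 2 ≤ i ∧ i ≤ n ∧ c = (i, A.left i)}

def toFB (hn : 1 ≤ n) : FB n where
  cells := A.cells
  isCell_of_mem := by
    rintro c (rfl | ⟨j, hj1, hjn, rfl⟩ | ⟨i, hi2, hin, rfl⟩)
    · exact ⟨le_rfl, hn, hn, le_rfl, Or.inl (by simp [root])⟩
    · have := A.one_le_up j hj1 hjn
      have := A.up_le_succ j hj1 hjn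
      exact ⟨by omega, by omega, hj1, hjn.le, Or.inr (by omega)⟩
    · have := A.sub_one_le_left i hi2 hin
      have := A.left_le i hi2 hin
      exact ⟨by omega, hin, by omega, by omega, Or.inr (by omega)⟩
  root_mem := Or.inl rfl
  border_mem := by
    rintro ⟨i, j⟩ ⟨hi2, hin, hj⟩
    simp only at hi2 hin hj
    subst hj
    rcases A.border i hi2 hin with h | h
    · exact Or.inr (Or.inr ⟨i, hi2, hin, by rw [h]⟩)
    · exact Or.inr (Or.inl ⟨i - 1, by omega, by omega, by rw [h]⟩)
  supported := by
    rintro c (rfl | ⟨j, hj1, hjn, rfl⟩ | ⟨i, hi2, hin, rfl⟩) hroot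
    · exact absurd rfl hroot
    · by_cases h : A.up j = 1
      · exact Or.inl ⟨n, hjn, Or.inl (by simp [root, h])⟩
      · have := A.one_le_up j hj1 hjn
        have := A.up_le_succ j hj1 hjn
        exact Or.inl ⟨_, (A.up_supported j hj1 hjn).resolve_left h,
          Or.inr (Or.inr ⟨A.up j, by omega, by omega, rfl⟩)⟩
    · have := A.sub_one_le_left i hi2 hin
      have := A.left_le i hi2 hin
      by_cases h : A.left i = n
      · exact Or.inr ⟨1, by omega, Or.inl (by simp [root, h])⟩
      · exact Or.inr ⟨_, (A.left_supported i hi2 hin).resolve_left h,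
          Or.inr (Or.inl ⟨A.left i, by omega, by omega, rfl⟩)⟩

variable (hn : 1 ≤ n)

lemma upRow_toFB {j : ℕ} (hj1 : 1 ≤ j) (hjn : j < n) : upRow (A.toFB hn) j = A.up j := by
  refine IsLeast.csInf_eq ⟨Or.inr (Or.inl ⟨j, hj1, hjn, rfl⟩), ?_⟩
  rintro r (hr | ⟨j', -, -, hr⟩ | ⟨i, hi2, hin, hr⟩) <;>
    simp only [root, Prod.mk.injEq] at hr
  · omega
  · obtain ⟨rfl, rfl⟩ := hr
    exact le_rfl
  · obtain ⟨rfl, rfl⟩ := hr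
    exact (A.left_supported r hi2 hin).resolve_left (by omega) |>.le

lemma leftCol_toFB {i : ℕ} (hi2 : 2 ≤ i) (hin : i ≤ n) :
    leftCol (A.toFB hn) i = A.left i := by
  refine IsGreatest.csSup_eq ⟨Or.inr (Or.inr ⟨i, hi2, hin, rfl⟩), ?_⟩
  rintro c (hc | ⟨j, hj1, hjn, hc⟩ | ⟨i', -, -, hc⟩) <;>
    simp only [root, Prod.mk.injEq] at hc
  · omega
  · obtain ⟨rfl, rfl⟩ := hc
    exact (A.up_supported c hj1 hjn).resolve_left (by omega) |>.le
  · obtain ⟨rfl, rfl⟩ := hc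
    exact le_rfl

lemma isSmall_toFB : IsSmall (A.toFB hn) := by
  rintro c (hr | ⟨j, hj1, hjn, rfl⟩ | ⟨i, hi2, hin, rfl⟩) hroot
  · exact absurd hr hroot
  · exact Or.inr ((isUpArrow_iff _).2 ⟨hj1, hjn, (A.upRow_toFB hn hj1 hjn).symm⟩)
  · exact Or.inl ((isLeftArrow_iff _).2 ⟨hi2, hin, (A.leftCol_toFB hn hi2 hin).symm⟩)

end Arrows

section Meet

variable (M N : FB n)

noncomputable def meetUp (j : ℕ) : ℕ := max (upRow M j) (upRow N j)

/-- The left-arrow of row `i` starts at the leftmost of those of `M` and `N` and moves left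
until the up-arrow of its column lies strictly above row `i`, which makes it supported. -/
noncomputable def meetLeft (i : ℕ) : ℕ :=
  sInf {j | max (leftCol M i) (leftCol N i) ≤ j ∧ (j = n ∨ meetUp M N j < i)}

variable {M N}

lemma meetLeft_spec (i : ℕ) : max (leftCol M i) (leftCol N i) ≤ meetLeft M N i ∧
    (meetLeft M N i = n ∨ meetUp M N (meetLeft M N i) < i) :=
  Nat.sInf_mem (s := {j | max (leftCol M i) (leftCol N i) ≤ j ∧ (j = n ∨ meetUp M N j < i)})
    ⟨n, max_le (leftCol_le_n M i) (leftCol_le_n N i), Or.inl rfl⟩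

lemma meetLeft_le {i j : ℕ} (hmax : max (leftCol M i) (leftCol N i) ≤ j)
    (hj : j = n ∨ meetUp M N j < i) : meetLeft M N i ≤ j :=
  Nat.sInf_le ⟨hmax, hj⟩

lemma meetLeft_border (hM : IsSmall M) (hN : IsSmall N) {i : ℕ} (h2 : 2 ≤ i) (h3 : i ≤ n) :
    meetLeft M N i = i - 1 ∨ meetUp M N (i - 1) = i := by
  have hle : meetUp M N (i - 1) ≤ i :=
    max_le (upRow_le (M.mk_sub_one_mem h2 h3)) (upRow_le (N.mk_sub_one_mem h2 h3))
  rcases hM.border h2 h3 with hlM | huM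
  · rcases hN.border h2 h3 with hlN | huN
    · by_contra! h
      refine h.1 ((meetLeft_le (by omega) (Or.inr ?_)).antisymm ?_)
      · exact lt_of_le_of_ne hle h.2
      · exact (sub_one_le_leftCol M h2 h3).trans ((le_max_left _ _).trans (meetLeft_spec i).1)
    · exact Or.inr (hle.antisymm (le_max_of_le_right huN.ge))
  · exact Or.inr (hle.antisymm (le_max_of_le_left huM.ge))

lemma lt_meetLeft_meetUp {j : ℕ} (h1 : 1 ≤ j) (h2 : j < n) (h : 2 ≤ meetUp M N j) :
    j < meetLeft M N (meetUp M N j) := by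
  refine lt_of_lt_of_le ?_ (meetLeft_spec _).1
  rcases max_choice (upRow M j) (upRow N j) with hM | hN
  · rw [meetUp, hM] at h ⊢
    exact (lt_leftCol_upRow M h1 h2 h).trans_le (le_max_left _ _)
  · rw [meetUp, hN] at h ⊢
    exact (lt_leftCol_upRow N h1 h2 h).trans_le (le_max_right _ _)

variable (M N) in
noncomputable def meetArrows (hM : IsSmall M) (hN : IsSmall N) : Arrows n where
  up := meetUp M N
  left := meetLeft M N
  one_le_up _ h1 h2 := le_max_of_le_left (one_le_upRow M h1 h2)
  up_le_succ _ h1 h2 := max_le (upRow_le_succ M h1 h2) (upRow_le_succ N h1 h2)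
  sub_one_le_left i h2 h3 :=
    (sub_one_le_leftCol M h2 h3).trans ((le_max_left _ _).trans (meetLeft_spec i).1)
  left_le i _ _ := meetLeft_le (max_le (leftCol_le_n M i) (leftCol_le_n N i)) (Or.inl rfl)
  border _ h2 h3 := meetLeft_border hM hN h2 h3
  up_supported j h1 h2 := by
    by_cases h : meetUp M N j = 1
    · exact Or.inl h
    · have : 1 ≤ meetUp M N j := le_max_of_le_left (one_le_upRow M h1 h2)
      exact Or.inr (lt_meetLeft_meetUp h1 h2 (by omega))
  left_supported i _ _ := (meetLeft_spec i).2

noncomputable def meet (hM : IsSmall M) (hN : IsSmall N) : FB n :=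
  (meetArrows M N hM hN).toFB M.one_le

variable (hM : IsSmall M) (hN : IsSmall N)

lemma isSmall_meet : IsSmall (meet hM hN) := Arrows.isSmall_toFB _ _

lemma upRow_meet {j : ℕ} (h1 : 1 ≤ j) (h2 : j < n) : upRow (meet hM hN) j = meetUp M N j :=
  Arrows.upRow_toFB _ _ h1 h2

lemma leftCol_meet {i : ℕ} (h2 : 2 ≤ i) (h3 : i ≤ n) :
    leftCol (meet hM hN) i = meetLeft M N i :=
  Arrows.leftCol_toFB _ _ h2 h3

lemma isMeet_meet : IsMeet M N (meet hM hN) := by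
  refine ⟨?_, ?_, fun t htM htN => lhd_iff.2 ⟨?_, ?_, ?_⟩⟩
  · refine lhd_of_isSmall (isSmall_meet hM hN) (fun j h1 h2 => ?_) fun i h2 h3 => ?_
    · exact (le_max_left _ _).trans (upRow_meet hM hN h1 h2).ge
    · exact ((le_max_left _ _).trans (meetLeft_spec i).1).trans (leftCol_meet hM hN h2 h3).ge
  · refine lhd_of_isSmall (isSmall_meet hM hN) (fun j h1 h2 => ?_) fun i h2 h3 => ?_
    · exact (le_max_right _ _).trans (upRow_meet hM hN h1 h2).ge
    · exact ((le_max_right _ _).trans (meetLeft_spec i).1).trans (leftCol_meet hM hN h2 h3).ge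
  · intro j h1 h2
    rw [upRow_meet hM hN h1 h2]
    exact max_le (htM.upRow_le h1 h2) (htN.upRow_le h1 h2)
  · intro i h2 h3
    rw [leftCol_meet hM hN h2 h3]
    refine meetLeft_le (max_le (htM.leftCol_le h2 h3) (htN.leftCol_le h2 h3)) ?_
    by_cases hn : leftCol t i = n
    · exact Or.inl hn
    have h1 : 1 ≤ leftCol t i := by have := sub_one_le_leftCol t h2 h3; omega
    have hlt : leftCol t i < n := lt_of_le_of_ne (leftCol_le_n t i) hn
    exact Or.inr ((max_le (htM.upRow_le h1 hlt) (htN.upRow_le h1 hlt)).trans_lt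
      (upRow_leftCol_lt t h2 h3))
  · rintro ⟨i, j⟩ hfree hfree' hc
    obtain ⟨hcell, hup, hleft⟩ := (isFree_iff _).1 hfree'
    obtain ⟨hi2, hjn⟩ := hfree'.two_le_and_lt
    rw [upRow_meet hM hN hcell.2.2.1 hjn] at hup
    rw [leftCol_meet hM hN hi2 hcell.2.1] at hleft
    have := meetLeft_le (max_le (leftCol_le_of_lhd_of_isFree hM htM hfree hc)
      (leftCol_le_of_lhd_of_isFree hN htN hfree hc)) (Or.inr hup)
    omega

lemma isBinary_meet (hMb : IsBinary M) (hNb : IsBinary N) : IsBinary (meet hM hN) := by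
  rintro ⟨i, j⟩ hfree
  obtain ⟨hcell, hup, hleft⟩ := (isFree_iff _).1 hfree
  obtain ⟨hi2, hjn⟩ := hfree.two_le_and_lt
  rw [upRow_meet hM hN hcell.2.2.1 hjn] at hup
  rw [leftCol_meet hM hN hi2 hcell.2.1] at hleft
  have hlM : leftCol M i ≤ j := by
    by_contra! h
    exact hMb _ ((isFree_iff M).2 ⟨hcell, (le_max_left _ _).trans_lt hup, h⟩)
  have hlN : leftCol N i ≤ j := by
    by_contra! h
    exact hNb _ ((isFree_iff N).2 ⟨hcell, (le_max_right _ _).trans_lt hup, h⟩)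
  have := meetLeft_le (max_le hlM hlN) (Or.inr hup)
  omega

end Meet

section Join

variable (M N : FB n)

noncomputable def joinLeft (i : ℕ) : ℕ := min (leftCol M i) (leftCol N i)

/-- Dual to `meetLeft`: the up-arrow of column `j` starts at the higher of those of `M` and
`N` and moves up until the left-arrow of its row lies strictly to the left of column `j`. -/
noncomputable def joinUp (j : ℕ) : ℕ :=
  sSup {i | i ≤ min (upRow M j) (upRow N j) ∧ (i = 1 ∨ j < joinLeft M N i)}

variable {M N}

lemma bddAbove_joinUp (j : ℕ) :
    BddAbove {i | i ≤ min (upRow M j) (upRow N j) ∧ (i = 1 ∨ j < joinLeft M N i)} :=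
  ⟨_, fun _ hi => hi.1⟩

lemma joinUp_spec {j : ℕ} (h1 : 1 ≤ j) (h2 : j < n) :
    joinUp M N j ≤ min (upRow M j) (upRow N j) ∧
      (joinUp M N j = 1 ∨ j < joinLeft M N (joinUp M N j)) :=
  Nat.sSup_mem (s := {i | i ≤ min (upRow M j) (upRow N j) ∧ (i = 1 ∨ j < joinLeft M N i)})
    ⟨1, le_min (one_le_upRow M h1 h2) (one_le_upRow N h1 h2), Or.inl rfl⟩ (bddAbove_joinUp j)

lemma le_joinUp {i j : ℕ} (hmin : i ≤ min (upRow M j) (upRow N j))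
    (hi : i = 1 ∨ j < joinLeft M N i) : i ≤ joinUp M N j :=
  le_csSup (bddAbove_joinUp j) ⟨hmin, hi⟩

lemma joinUp_border (hM : IsSmall M) (hN : IsSmall N) {i : ℕ} (h2 : 2 ≤ i) (h3 : i ≤ n) :
    joinLeft M N i = i - 1 ∨ joinUp M N (i - 1) = i := by
  have hge : i - 1 ≤ joinLeft M N i :=
    le_min (sub_one_le_leftCol M h2 h3) (sub_one_le_leftCol N h2 h3)
  rcases hM.border h2 h3 with hlM | huM
  · exact Or.inl (((min_le_left _ _).trans hlM.le).antisymm hge)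
  rcases hN.border h2 h3 with hlN | huN
  · exact Or.inl (((min_le_right _ _).trans hlN.le).antisymm hge)
  have hmin : min (upRow M (i - 1)) (upRow N (i - 1)) = i := by rw [huM, huN, min_self]
  rcases hge.eq_or_lt with h | h
  · exact Or.inl h.symm
  · exact Or.inr (((joinUp_spec (by omega) (by omega)).1.trans hmin.le).antisymm
      (le_joinUp hmin.ge (Or.inr h)))

lemma joinLeft_supported {i : ℕ} (h2 : 2 ≤ i) (h3 : i ≤ n) :
    joinLeft M N i = n ∨ joinUp M N (joinLeft M N i) < i := by
  by_cases hn : joinLeft M N i = n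
  · exact Or.inl hn
  have h1 : 1 ≤ joinLeft M N i := by
    have : i - 1 ≤ joinLeft M N i :=
      le_min (sub_one_le_leftCol M h2 h3) (sub_one_le_leftCol N h2 h3)
    omega
  have hlt : joinLeft M N i < n :=
    lt_of_le_of_ne ((min_le_left _ _).trans (leftCol_le_n M i)) hn
  refine Or.inr ((joinUp_spec h1 hlt).1.trans_lt ?_)
  rcases min_choice (leftCol M i) (leftCol N i) with hM | hN
  · rw [show joinLeft M N i = leftCol M i from hM]
    exact (min_le_left _ _).trans_lt (upRow_leftCol_lt M h2 h3)
  · rw [show joinLeft M N i = leftCol N i from hN]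
    exact (min_le_right _ _).trans_lt (upRow_leftCol_lt N h2 h3)

variable (M N) in
noncomputable def joinArrows (hM : IsSmall M) (hN : IsSmall N) : Arrows n where
  up := joinUp M N
  left := joinLeft M N
  one_le_up _ h1 h2 :=
    le_joinUp (le_min (one_le_upRow M h1 h2) (one_le_upRow N h1 h2)) (Or.inl rfl)
  up_le_succ _ h1 h2 :=
    (joinUp_spec h1 h2).1.trans ((min_le_left _ _).trans (upRow_le_succ M h1 h2))
  sub_one_le_left _ h2 h3 := le_min (sub_one_le_leftCol M h2 h3) (sub_one_le_leftCol N h2 h3)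
  left_le i _ _ := (min_le_left _ _).trans (leftCol_le_n M i)
  border _ h2 h3 := joinUp_border hM hN h2 h3
  up_supported _ h1 h2 := (joinUp_spec h1 h2).2
  left_supported _ h2 h3 := joinLeft_supported h2 h3

noncomputable def join (hM : IsSmall M) (hN : IsSmall N) : FB n :=
  (joinArrows M N hM hN).toFB M.one_le

variable (hM : IsSmall M) (hN : IsSmall N)

lemma isSmall_join : IsSmall (join hM hN) := Arrows.isSmall_toFB _ _

lemma upRow_join {j : ℕ} (h1 : 1 ≤ j) (h2 : j < n) : upRow (join hM hN) j = joinUp M N j :=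
  Arrows.upRow_toFB _ _ h1 h2

lemma leftCol_join {i : ℕ} (h2 : 2 ≤ i) (h3 : i ≤ n) :
    leftCol (join hM hN) i = joinLeft M N i :=
  Arrows.leftCol_toFB _ _ h2 h3

lemma isJoin_join : IsJoin M N (join hM hN) := by
  refine ⟨?_, ?_, fun t hMt hNt => lhd_of_isSmall (isSmall_join hM hN) ?_ ?_⟩
  · refine lhd_of_isSmall hM (fun j h1 h2 => ?_) fun i h2 h3 => ?_
    · exact (upRow_join hM hN h1 h2).trans_le ((joinUp_spec h1 h2).1.trans (min_le_left _ _))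
    · exact (leftCol_join hM hN h2 h3).trans_le (min_le_left _ _)
  · refine lhd_of_isSmall hN (fun j h1 h2 => ?_) fun i h2 h3 => ?_
    · exact (upRow_join hM hN h1 h2).trans_le ((joinUp_spec h1 h2).1.trans (min_le_right _ _))
    · exact (leftCol_join hM hN h2 h3).trans_le (min_le_right _ _)
  · intro j h1 h2
    rw [upRow_join hM hN h1 h2]
    refine le_joinUp (le_min (hMt.upRow_le h1 h2) (hNt.upRow_le h1 h2)) ?_
    by_cases hu : upRow t j = 1
    · exact Or.inl hu
    have h2' : 2 ≤ upRow t j := by have := one_le_upRow t h1 h2; omega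
    have h3' : upRow t j ≤ n := (t.isCell_of_mem _ (mk_upRow_mem t h1 h2)).2.1
    exact Or.inr ((lt_leftCol_upRow t h1 h2 h2').trans_le
      (le_min (hMt.leftCol_le h2' h3') (hNt.leftCol_le h2' h3')))
  · intro i h2 h3
    rw [leftCol_join hM hN h2 h3]
    exact le_min (hMt.leftCol_le h2 h3) (hNt.leftCol_le h2 h3)

lemma isBinary_join (hMb : IsBinary M) (hNb : IsBinary N) : IsBinary (join hM hN) := by
  rintro ⟨i, j⟩ hfree
  obtain ⟨hcell, hup, hleft⟩ := (isFree_iff _).1 hfree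
  obtain ⟨hi2, hjn⟩ := hfree.two_le_and_lt
  rw [upRow_join hM hN hcell.2.2.1 hjn] at hup
  rw [leftCol_join hM hN hi2 hcell.2.1] at hleft
  have huM : i ≤ upRow M j := by
    by_contra! h
    exact hMb _ ((isFree_iff M).2 ⟨hcell, h, hleft.trans_le (min_le_left _ _)⟩)
  have huN : i ≤ upRow N j := by
    by_contra! h
    exact hNb _ ((isFree_iff N).2 ⟨hcell, h, hleft.trans_le (min_le_right _ _)⟩)
  exact absurd hup (not_lt.2 (le_joinUp (le_min huM huN) (Or.inr hleft)))

end Join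

theorem small_binary_sublattices_general (n : ℕ) :
    (∀ M N L : FB n, IsSmall M → IsSmall N → IsMeet M N L → IsSmall L) ∧
    (∀ M N L : FB n, IsSmall M → IsSmall N → IsJoin M N L → IsSmall L) ∧
    (∀ M N L : FB n, IsBinary M → IsBinary N → IsMeet M N L → IsBinary L) ∧
    (∀ M N L : FB n, IsBinary M → IsBinary N → IsJoin M N L → IsBinary L) ∧
    (∀ T : FB n, IsBinary T → IsSmall T) := by
  refine ⟨fun M N L hM hN hL => ?_, fun M N L hM hN hL => ?_, fun M N L hM hN hL => ?_,
    fun M N L hM hN hL => ?_, fun T hT => hT.isSmall⟩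
  · exact hL.unique (isMeet_meet hM hN) ▸ isSmall_meet hM hN
  · exact hL.unique (isJoin_join hM hN) ▸ isSmall_join hM hN
  · exact hL.unique (isMeet_meet hM.isSmall hN.isSmall) ▸ isBinary_meet _ _ hM hN
  · exact hL.unique (isJoin_join hM.isSmall hN.isSmall) ▸ isBinary_join _ _ hM hN

/-- meets and joins of small fb-tableaux are small, meets and joins of
binary fb-tableaux are binary; consequently the small fb-tableaux form a sublattice
`sTam n` of `esTam n`, and the binary fb-tableaux form a sublattice `Tam n` of
`sTam n` (in particular every binary fb-tableau is small). -/
theorem small_binary_sublattices (n : ℕ) (hn : 1 ≤ n) :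
    (∀ M N L : FB n, IsSmall M → IsSmall N → IsMeet M N L → IsSmall L) ∧
    (∀ M N L : FB n, IsSmall M → IsSmall N → IsJoin M N L → IsSmall L) ∧
    (∀ M N L : FB n, IsBinary M → IsBinary N → IsMeet M N L → IsBinary L) ∧
    (∀ M N L : FB n, IsBinary M → IsBinary N → IsJoin M N L → IsBinary L) ∧
    (∀ T : FB n, IsBinary T → IsSmall T) :=
  small_binary_sublattices_general n

end EsTam
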